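/- arXiv:2601.16361 — 3 statements merged into one kernel-verified Lean document; each statement's English description precedes it below -/
import Mathlib

section
/- There exists a bitopological space (X, τ⁺, τ⁻) that is antisymmetrically connected but whose join topology τ∨ = τ⁺ ⊔ τ⁻ is disconnected. Concretely: X = {0,1,2}, τ⁺ = {∅, X}, τ⁻ = {∅, {2}, {0,1}, X} gives τ∨ = τ⁻ disconnected, while X admits no partition into a nonempty τ⁺-open set and a nonempty τ⁻-open set. -/
open Set TopologicalSpace

/-- The backward topology on `{0,1,2}`: generated by `{2}` and `{0,1}`. -/
def tmEx : TopologicalSpace (Fin 3) :=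
  generateFrom {({2} : Set (Fin 3)), ({0, 1} : Set (Fin 3))}

namespace Bitopology

variable {X : Type*}

def IsAntisymmConnected (τp τm : TopologicalSpace X) : Prop :=
  ¬ ∃ A B : Set X, A.Nonempty ∧ B.Nonempty ∧ τp.IsOpen A ∧ τm.IsOpen B ∧
    Disjoint A B ∧ A ∪ B = univ

def HasOpenPartition (τ : TopologicalSpace X) : Prop :=
  ∃ U V : Set X, U.Nonempty ∧ V.Nonempty ∧ τ.IsOpen U ∧ τ.IsOpen V ∧
    Disjoint U V ∧ U ∪ V = univ

/-- The only nonempty open set of the indiscrete topology is the whole space, which leaves no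
room for a nonempty second part. -/
theorem isAntisymmConnected_top_left (τ : TopologicalSpace X) :
    IsAntisymmConnected ⊤ τ := by
  rintro ⟨A, B, hA, ⟨b, hb⟩, hAopen, -, hAB, -⟩
  rcases (isOpen_top_iff A).mp hAopen with rfl | rfl
  · exact hA.ne_empty rfl
  · exact hAB.ne_of_mem (mem_univ b) hb rfl

theorem hasOpenPartition_generateFrom_pair {U V : Set X} (hU : U.Nonempty) (hV : V.Nonempty)
    (hUV : Disjoint U V) (hcover : U ∪ V = univ) : HasOpenPartition (generateFrom {U, V}) :=
  ⟨U, V, hU, hV, isOpen_generateFrom_of_mem (by simp), isOpen_generateFrom_of_mem (by simp),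
    hUV, hcover⟩

end Bitopology

open Bitopology

theorem tmEx_hasOpenPartition : HasOpenPartition tmEx := by
  refine hasOpenPartition_generateFrom_pair (singleton_nonempty 2) (insert_nonempty 0 _) ?_ ?_
  · simp [Fin.ext_iff]
  · ext x
    fin_cases x <;> simp

/-- The bitopological space `X = {0,1,2}` with `τ⁺` indiscrete and
`τ⁻ = {∅, {2}, {0,1}, X}` is antisymmetrically connected, yet its join topology
(`⊓` in Mathlib's order on topologies) is disconnected. -/
theorem antisym_connected_but_join_disconnected :
    (¬ ∃ A B : Set (Fin 3), A.Nonempty ∧ B.Nonempty ∧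
        (⊤ : TopologicalSpace (Fin 3)).IsOpen A ∧ tmEx.IsOpen B ∧
        Disjoint A B ∧ A ∪ B = univ) ∧
    (∃ U V : Set (Fin 3), U.Nonempty ∧ V.Nonempty ∧
        ((⊤ : TopologicalSpace (Fin 3)) ⊓ tmEx).IsOpen U ∧
        ((⊤ : TopologicalSpace (Fin 3)) ⊓ tmEx).IsOpen V ∧
        Disjoint U V ∧ U ∪ V = univ) := by
  refine ⟨isAntisymmConnected_top_left tmEx, ?_⟩
  -- Topologies are ordered by reverse inclusion: `⊤` is indiscrete and the join is `⊓`.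
  rw [top_inf_eq]
  exact tmEx_hasOpenPartition
end

section
/- Let (X, τ⁺, τ⁻) be a bitopological space and let A, B ⊆ X be antisymmetrically connected subsets with A ∩ B ≠ ∅. Then A ∪ B is antisymmetrically connected. -/
/-!
As for ordinary connectedness: reformulated through a `tp`-open `U` and a `tm`-open `V` covering
`A ∪ B` without meeting inside it, each of `A` and `B` lies entirely in `U` or entirely in `V`,
and the common point forces both onto the same side.
-/

open Set

/-- A subset `C` is antisymmetrically connected w.r.t. a bitopology `(tp, tm)` if it
cannot be partitioned into two nonempty disjoint sets, one relatively `tp`-open in `C`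
and the other relatively `tm`-open in `C`. -/
def AntisymConn {X : Type*} (tp tm : TopologicalSpace X) (C : Set X) : Prop :=
  ¬ ∃ H K : Set X, H.Nonempty ∧ K.Nonempty ∧ Disjoint H K ∧ C = H ∪ K ∧
    (∃ O : Set X, tp.IsOpen O ∧ H = C ∩ O) ∧ (∃ O : Set X, tm.IsOpen O ∧ K = C ∩ O)

theorem antisymConn_iff_subset_or_subset {X : Type*} {tp tm : TopologicalSpace X}
    {C : Set X} :
    AntisymConn tp tm C ↔ ∀ U V : Set X, tp.IsOpen U → tm.IsOpen V → C ⊆ U ∪ V →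
      Disjoint (C ∩ U) (C ∩ V) → C ⊆ U ∨ C ⊆ V := by
  constructor
  · intro hC U V hU hV hCUV hdisj
    by_contra! ⟨hCU, hCV⟩
    obtain ⟨a, haC, haU⟩ := not_subset.mp hCU
    obtain ⟨b, hbC, hbV⟩ := not_subset.mp hCV
    have hC_eq : C = C ∩ U ∪ C ∩ V := by
      rw [← inter_union_distrib_left, inter_eq_left.mpr hCUV]
    exact hC ⟨C ∩ U, C ∩ V, ⟨b, hbC, (hCUV hbC).resolve_right hbV⟩,
      ⟨a, haC, (hCUV haC).resolve_left haU⟩, hdisj, hC_eq, ⟨U, hU, rfl⟩, ⟨V, hV, rfl⟩⟩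
  · rintro hC ⟨H, K, hH, hK, hHK, hC_eq, ⟨U, hU, rfl⟩, ⟨V, hV, rfl⟩⟩
    have hCUV : C ⊆ U ∪ V := hC_eq.subset.trans (union_subset_union inter_subset_right
      inter_subset_right)
    rcases hC U V hU hV hCUV hHK with hCU | hCV
    · exact hK.ne_empty (hHK.symm.eq_bot_of_le fun x hx => ⟨hx.1, hCU hx.1⟩)
    · exact hH.ne_empty (hHK.eq_bot_of_le fun x hx => ⟨hx.1, hCV hx.1⟩)

theorem AntisymConn.subset_or_subset {X : Type*} {tp tm : TopologicalSpace X}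
    {C S U V : Set X} (hC : AntisymConn tp tm C) (hCS : C ⊆ S) (hU : tp.IsOpen U)
    (hV : tm.IsOpen V) (hSUV : S ⊆ U ∪ V) (hdisj : Disjoint (S ∩ U) (S ∩ V)) :
    C ⊆ U ∨ C ⊆ V :=
  antisymConn_iff_subset_or_subset.mp hC U V hU hV (hCS.trans hSUV)
    (hdisj.mono (inter_subset_inter_left _ hCS) (inter_subset_inter_left _ hCS))

/-- The union of two antisymmetrically connected subsets with a common point is
antisymmetrically connected. -/
theorem antisymConn_union {X : Type*}
    (tp tm : TopologicalSpace X) (A B : Set X)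
    (hA : AntisymConn tp tm A) (hB : AntisymConn tp tm B)
    (hAB : (A ∩ B).Nonempty) :
    AntisymConn tp tm (A ∪ B) := by
  rw [antisymConn_iff_subset_or_subset]
  intro U V hU hV hcover hdisj
  obtain ⟨x, hxA, hxB⟩ := hAB
  have hx : x ∈ A ∪ B := .inl hxA
  rcases hA.subset_or_subset subset_union_left hU hV hcover hdisj with hAU | hAV <;>
    rcases hB.subset_or_subset subset_union_right hU hV hcover hdisj with hBU | hBV
  · exact .inl (union_subset hAU hBU)
  · exact absurd rfl (hdisj.ne_of_mem ⟨hx, hAU hxA⟩ ⟨hx, hBV hxB⟩)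
  · exact absurd rfl (hdisj.ne_of_mem ⟨hx, hBU hxB⟩ ⟨hx, hAV hxA⟩)
  · exact .inr (union_subset hAV hBV)
end

section
/- Let f : X → Y where X carries topologies τ⁺_X, τ⁻_X and Y carries topologies τ⁺_Y, τ⁻_Y. Suppose f is continuous both as a map (X,τ⁺_X) → (Y,τ⁺_Y) and as a map (X,τ⁻_X) → (Y,τ⁻_Y). If C ⊆ X is antisymmetrically connected, then f(C) is antisymmetrically connected in Y. -/
open Set Topology

theorem antisymConn_iff {X : Type*} {tp tm : TopologicalSpace X} {C : Set X} :
    AntisymConn tp tm C ↔ ∀ O P, IsOpen[tp] O → IsOpen[tm] P → C ⊆ O ∪ P →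
      (C ∩ O).Nonempty → (C ∩ P).Nonempty → (C ∩ (O ∩ P)).Nonempty := by
  constructor
  · intro hC O P hO hP hcover hCO hCP
    by_contra hOP
    refine hC ⟨C ∩ O, C ∩ P, hCO, hCP, ?_, ?_, ⟨O, hO, rfl⟩, ⟨P, hP, rfl⟩⟩
    · rw [disjoint_iff_inter_eq_empty, ← inter_inter_distrib_left]
      exact not_nonempty_iff_eq_empty.mp hOP
    · rw [← inter_union_distrib_left, inter_eq_left.mpr hcover]
  · rintro hC ⟨_, _, hCO, hCP, hdisj, hunion, ⟨O, hO, rfl⟩, ⟨P, hP, rfl⟩⟩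
    have hcover : C ⊆ O ∪ P := by
      rw [hunion, ← inter_union_distrib_left]; exact inter_subset_right
    obtain ⟨x, hxC, hxO, hxP⟩ := hC O P hO hP hcover hCO hCP
    exact hdisj.ne_of_mem ⟨hxC, hxO⟩ ⟨hxC, hxP⟩ rfl

/-- Maps continuous for both the forward and backward topologies preserve
antisymmetric connectedness of subsets. -/
theorem antisymConn_image {X Y : Type*}
    (tpX tmX : TopologicalSpace X) (tpY tmY : TopologicalSpace Y)
    (f : X → Y)
    (hfp : @Continuous X Y tpX tpY f)
    (hfm : @Continuous X Y tmX tmY f)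
    (C : Set X) (hC : AntisymConn tpX tmX C) :
    AntisymConn tpY tmY (f '' C) := by
  rw [antisymConn_iff] at hC ⊢
  intro O P hO hP hcover hCO hCP
  rw [← image_inter_preimage, image_nonempty] at hCO hCP ⊢
  exact hC (f ⁻¹' O) (f ⁻¹' P) (continuous_def.mp hfp O hO) (continuous_def.mp hfm P hP)
    (image_subset_iff.mp hcover : C ⊆ f ⁻¹' (O ∪ P)) hCO hCP
end
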